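/- arXiv:2502.06363 — 5 statements merged into one kernel-verified Lean document; each statement's English description precedes it below -/
import Mathlib

section
/- Fix T ∈ ℕ+, real numbers λ̄ ≥ 0 and λ̃ > 0 with λ̄ ≤ λ̃, and a nonempty subset 𝒳̃ ⊆ 𝒳. Let x_{T,1},…,x_{T,T} ∈ 𝒳̃ be chosen by maximum variance reduction with noise level λ̄²: for every t ∈ [T] and every x ∈ 𝒳̃, σ_{λ̄²I_{t−1}}(x; X_{T,t−1}) ≤ σ_{λ̄²I_{t−1}}(x_{T,t}; X_{T,t−1}), where X_{T,t−1} := (x_{T,1},…,x_{T,t−1}); assume K(X_{T,t},X_{T,t}) + λ̄²I_t is invertible for every t ≤ T. Suppose γ ≥ 0 satisfies I_{λ̃²I_T}(Z) ≤ γ for every T-tuple Z of points of 𝒳, and that T/2 ≥ 3γ. Then for every x ∈ 𝒳̃, σ_{λ̄²I_T}(x; X_{T,T}) ≤ (4/T)·√(λ̃²·T·γ). -/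
open Matrix Real Finset

noncomputable section

universe u

/-- Gram (kernel) matrix of a finite tuple of points. -/
def gramMat {𝒳 : Type u} (k : 𝒳 → 𝒳 → ℝ) {m : ℕ} (X : Fin m → 𝒳) :
    Matrix (Fin m) (Fin m) ℝ :=
  Matrix.of fun i j => k (X i) (X j)

/-- Kernel vector `k(x, X)`. -/
def kVec {𝒳 : Type u} (k : 𝒳 → 𝒳 → ℝ) {m : ℕ} (X : Fin m → 𝒳) (x : 𝒳) : Fin m → ℝ :=
  fun i => k x (X i)

/-- Posterior variance `σ²_Σ(x; X)`. -/
def postVar {𝒳 : Type u} (k : 𝒳 → 𝒳 → ℝ) {m : ℕ} (S : Matrix (Fin m) (Fin m) ℝ)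
    (X : Fin m → 𝒳) (x : 𝒳) : ℝ :=
  k x x - kVec k X x ⬝ᵥ ((gramMat k X + S)⁻¹ *ᵥ kVec k X x)

/-- Posterior standard deviation `σ_Σ(x; X)`. -/
def postStd {𝒳 : Type u} (k : 𝒳 → 𝒳 → ℝ) {m : ℕ} (S : Matrix (Fin m) (Fin m) ℝ)
    (X : Fin m → 𝒳) (x : 𝒳) : ℝ :=
  Real.sqrt (postVar k S X x)

/-- Posterior mean `μ_Σ(x; X, y)`. -/
def postMean {𝒳 : Type u} (k : 𝒳 → 𝒳 → ℝ) {m : ℕ} (S : Matrix (Fin m) (Fin m) ℝ)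
    (X : Fin m → 𝒳) (y : Fin m → ℝ) (x : 𝒳) : ℝ :=
  kVec k X x ⬝ᵥ ((gramMat k X + S)⁻¹ *ᵥ y)

/-- Information gain `I_Σ(Z)`. -/
def infoGain {𝒳 : Type u} (k : 𝒳 → 𝒳 → ℝ) {m : ℕ} (S : Matrix (Fin m) (Fin m) ℝ)
    (Z : Fin m → 𝒳) : ℝ :=
  (1 / 2) * Real.log ((S + gramMat k Z).det / S.det)

/-- `k` is a symmetric positive semidefinite kernel. -/
def IsKernel {𝒳 : Type u} (k : 𝒳 → 𝒳 → ℝ) : Prop :=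
  (∀ x y, k x y = k y x) ∧ ∀ (m : ℕ) (Z : Fin m → 𝒳), (gramMat k Z).PosSemidef

/-- Prefix of length `t` of a sequence of points. -/
def preT {𝒳 : Type u} (x : ℕ → 𝒳) (t : ℕ) : Fin t → 𝒳 := fun i => x i.val

/-!
Let `w_s` be the posterior variance of the query point `x_s` given `x_0, …, x_{s-1}` under the
larger noise `λ̃²`. For every `s < T` the final posterior variance at `x` is at most `w_s`:
conditioning on fewer points and raising the noise from `λ̄²` to `λ̃²` can only increase it (both
follow from `z ⬝ M⁻¹ z = max_y (2 y ⬝ z - y ⬝ M y)`), and in between the MVR rule replaces `x` by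
`x_s`. On the other hand, Schur complements factor `det (K + λ̃² I)` as `∏ (λ̃² + w_s)`, so the
information gain of the chosen points is `½ ∑ log (1 + w_s / λ̃²) ≤ γ`. With
`log (1 + y) ≥ y / (1 + y)` and `T ≥ 6 γ` this bounds the final variance by `3 λ̃² γ / T`.
-/

namespace Matrix

lemma replicateRow_mul_mul_replicateCol {m : Type*} [Fintype m] (ι : Type*)
    (A : Matrix m m ℝ) (v : m → ℝ) :
    replicateRow ι v * A * replicateCol ι v = of fun _ _ => v ⬝ᵥ (A *ᵥ v) := by
  rw [Matrix.mul_assoc, ← replicateCol_mulVec, replicateRow_mul_replicateCol]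

variable {m n : Type*} [Fintype m] [DecidableEq m] [Fintype n] [DecidableEq n]

lemma PosDef.two_mul_dotProduct_sub_le_dotProduct_inv_mulVec {M : Matrix n n ℝ}
    (hM : M.PosDef) (y z : n → ℝ) :
    2 * (y ⬝ᵥ z) - y ⬝ᵥ (M *ᵥ y) ≤ z ⬝ᵥ (M⁻¹ *ᵥ z) := by
  have hMM : M *ᵥ (M⁻¹ *ᵥ z) = z := by
    rw [mulVec_mulVec, mul_nonsing_inv _ ((isUnit_iff_isUnit_det M).mp hM.isUnit), one_mulVec]
  have hsymm : ∀ a b : n → ℝ, a ⬝ᵥ (M *ᵥ b) = b ⬝ᵥ (M *ᵥ a) := fun a b => by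
    rw [dotProduct_mulVec, ← mulVec_transpose, ← conjTranspose_eq_transpose_of_trivial,
      hM.isHermitian.eq, dotProduct_comm]
  have h := hM.posSemidef.dotProduct_mulVec_nonneg (M⁻¹ *ᵥ z - y)
  simp only [star_trivial, mulVec_sub, sub_dotProduct, dotProduct_sub, hMM] at h
  rw [hsymm _ y, hMM, dotProduct_comm _ z] at h
  linarith [dotProduct_comm y z]

lemma PosDef.dotProduct_inv_mulVec_le_of_posSemidef_sub {M N : Matrix n n ℝ}
    (hM : M.PosDef) (hN : N.PosDef) (hMN : (N - M).PosSemidef) (z : n → ℝ) :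
    z ⬝ᵥ (N⁻¹ *ᵥ z) ≤ z ⬝ᵥ (M⁻¹ *ᵥ z) := by
  set y := N⁻¹ *ᵥ z
  have hNy : N *ᵥ y = z := by
    rw [mulVec_mulVec, mul_nonsing_inv _ ((isUnit_iff_isUnit_det N).mp hN.isUnit), one_mulVec]
  have h := hMN.dotProduct_mulVec_nonneg y
  rw [star_trivial, sub_mulVec, dotProduct_sub, hNy] at h
  have := hM.two_mul_dotProduct_sub_le_dotProduct_inv_mulVec y z
  rw [dotProduct_comm y z] at h this
  linarith

lemma PosDef.dotProduct_submatrix_inv_mulVec_le {M : Matrix n n ℝ} (hM : M.PosDef)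
    {e : m → n} (he : Function.Injective e) (z : n → ℝ) :
    (z ∘ e) ⬝ᵥ ((M.submatrix e e)⁻¹ *ᵥ (z ∘ e)) ≤ z ⬝ᵥ (M⁻¹ *ᵥ z) := by
  -- test the variational bound for `M` at `Pᵀ w`, the zero extension of the submatrix optimum
  set P : Matrix m n ℝ := (1 : Matrix n n ℝ).submatrix e id
  have hPz : P *ᵥ z = z ∘ e := by
    ext j; simp [P, mulVec, dotProduct, one_apply]
  have hPMP : P * M * Pᵀ = M.submatrix e e := by
    ext i j; simp [P, mul_apply, one_apply]
  set w := (M.submatrix e e)⁻¹ *ᵥ (z ∘ e)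
  have hAw : M.submatrix e e *ᵥ w = z ∘ e := by
    rw [mulVec_mulVec, mul_nonsing_inv _ ((isUnit_iff_isUnit_det _).mp (hM.submatrix he).isUnit),
      one_mulVec]
  have hlin : (Pᵀ *ᵥ w) ⬝ᵥ z = w ⬝ᵥ (z ∘ e) := by
    rw [mulVec_transpose, ← dotProduct_mulVec, hPz]
  have hquad : (Pᵀ *ᵥ w) ⬝ᵥ (M *ᵥ (Pᵀ *ᵥ w)) = w ⬝ᵥ (z ∘ e) := by
    rw [mulVec_transpose, ← dotProduct_mulVec, ← mulVec_transpose, mulVec_mulVec, mulVec_mulVec,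
      hPMP, hAw]
  have h := hM.two_mul_dotProduct_sub_le_dotProduct_inv_mulVec (Pᵀ *ᵥ w) z
  rw [hlin, hquad, dotProduct_comm w] at h
  linarith

end Matrix

section Kernel

variable {𝒳 : Type u} {k : 𝒳 → 𝒳 → ℝ}

lemma gramMat_snoc_submatrix (hsymm : ∀ x y, k x y = k y x) {m : ℕ} (X : Fin m → 𝒳) (x : 𝒳) :
    (gramMat k (Fin.snoc X x : Fin (m + 1) → 𝒳)).submatrix finSumFinEquiv finSumFinEquiv =
      fromBlocks (gramMat k X) (replicateCol (Fin 1) (kVec k X x))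
        (replicateRow (Fin 1) (kVec k X x)) (of fun _ _ => k x x) := by
  have hlast : ∀ i : Fin 1, (Fin.natAdd m i : Fin (m + 1)) = Fin.last m := fun i => by
    rw [Fin.fin_one_eq_zero i]; rfl
  ext (i | i) (j | j) <;>
    simp [gramMat, kVec, hsymm x, hlast, ← Fin.castSucc.eq_def]

lemma IsKernel.posSemidef_gramMat_add_smul_one (hk : IsKernel k) {m : ℕ} (X : Fin m → 𝒳)
    {c : ℝ} (hc : 0 ≤ c) : (gramMat k X + c • (1 : Matrix (Fin m) (Fin m) ℝ)).PosSemidef :=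
  (hk.2 m X).add (PosSemidef.one.smul hc)

lemma IsKernel.posDef_gramMat_add_smul_one (hk : IsKernel k) {m : ℕ} (X : Fin m → 𝒳)
    {c : ℝ} (hc : 0 < c) : (gramMat k X + c • (1 : Matrix (Fin m) (Fin m) ℝ)).PosDef :=
  (PosDef.one.smul hc).posSemidef_add (hk.2 m X)

lemma postVar_le_postVar_comp {m n : ℕ} (X : Fin n → 𝒳) {S : Matrix (Fin n) (Fin n) ℝ}
    (hA : (gramMat k X + S).PosDef) {e : Fin m → Fin n} (he : Function.Injective e) (x : 𝒳) :
    postVar k S X x ≤ postVar k (S.submatrix e e) (X ∘ e) x := by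
  have h := hA.dotProduct_submatrix_inv_mulVec_le he (kVec k X x)
  unfold postVar
  exact sub_le_sub_left h _

lemma postVar_le_postVar_of_posSemidef_sub {m : ℕ} (X : Fin m → 𝒳)
    {S S' : Matrix (Fin m) (Fin m) ℝ} (hA : (gramMat k X + S).PosDef)
    (hA' : (gramMat k X + S').PosDef) (hS : (S' - S).PosSemidef) (x : 𝒳) :
    postVar k S X x ≤ postVar k S' X x := by
  rw [← add_sub_add_left_eq_sub S' S (gramMat k X)] at hS
  unfold postVar
  exact sub_le_sub_left (hA.dotProduct_inv_mulVec_le_of_posSemidef_sub hA' hS _) _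

lemma schur_complement_eq_postVar {m : ℕ} (X : Fin m → 𝒳) (S : Matrix (Fin m) (Fin m) ℝ)
    (x : 𝒳) (d : ℝ) :
    (of fun _ _ => k x x + d) - (replicateCol (Fin 1) (kVec k X x))ᴴ * (gramMat k X + S)⁻¹ *
      replicateCol (Fin 1) (kVec k X x) = of fun (_ _ : Fin 1) => d + postVar k S X x := by
  rw [conjTranspose_replicateCol, star_trivial, replicateRow_mul_mul_replicateCol]
  ext
  simp only [Matrix.sub_apply, of_apply, postVar]
  ring

lemma IsKernel.postVar_nonneg (hk : IsKernel k) {m : ℕ} (X : Fin m → 𝒳) {c : ℝ} (hc : 0 ≤ c)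
    (hA : (gramMat k X + c • (1 : Matrix (Fin m) (Fin m) ℝ)).PosDef) (x : 𝒳) :
    0 ≤ postVar k (c • (1 : Matrix (Fin m) (Fin m) ℝ)) X x := by
  have := hA.isUnit.invertible
  -- `postVar` is the Schur complement in the Gram matrix of `X` and `x` with noise only on `X`
  have hblock : fromBlocks (gramMat k X + c • 1) (replicateCol (Fin 1) (kVec k X x))
      (replicateCol (Fin 1) (kVec k X x))ᴴ (of fun _ _ => k x x + 0) =
      (gramMat k (Fin.snoc X x)).submatrix finSumFinEquiv finSumFinEquiv +
        diagonal (Sum.elim (fun _ => c) 0) := by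
    rw [gramMat_snoc_submatrix hk.1, ← fromBlocks_diagonal, fromBlocks_add,
      conjTranspose_replicateCol, star_trivial]
    simp [smul_one_eq_diagonal]
  have hpsd : (fromBlocks (gramMat k X + c • 1) (replicateCol (Fin 1) (kVec k X x))
      (replicateCol (Fin 1) (kVec k X x))ᴴ (of fun _ _ => k x x + 0)).PosSemidef := by
    rw [hblock]
    refine ((hk.2 _ _).submatrix _).add (posSemidef_diagonal_iff.mpr fun i => ?_)
    cases i <;> simp [hc]
  rw [PosDef.fromBlocks₁₁ _ _ hA, schur_complement_eq_postVar] at hpsd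
  simpa using hpsd.diag_nonneg (i := 0)

lemma IsKernel.det_gramMat_snoc_add_smul_one (hk : IsKernel k) {m : ℕ} (X : Fin m → 𝒳)
    (x : 𝒳) {c : ℝ} (hA : (gramMat k X + c • (1 : Matrix (Fin m) (Fin m) ℝ)).PosDef) :
    (gramMat k (Fin.snoc X x) + c • (1 : Matrix (Fin (m + 1)) (Fin (m + 1)) ℝ)).det =
      (gramMat k X + c • (1 : Matrix (Fin m) (Fin m) ℝ)).det *
        (c + postVar k (c • (1 : Matrix (Fin m) (Fin m) ℝ)) X x) := by
  have := hA.isUnit.invertible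
  have hblock : (gramMat k (Fin.snoc X x) + c • 1).submatrix finSumFinEquiv finSumFinEquiv =
      fromBlocks (gramMat k X + c • 1) (replicateCol (Fin 1) (kVec k X x))
        (replicateCol (Fin 1) (kVec k X x))ᴴ (of fun _ _ => k x x + c) := by
    have hsub : (gramMat k (Fin.snoc X x) + c • 1).submatrix finSumFinEquiv finSumFinEquiv =
        (gramMat k (Fin.snoc X x)).submatrix finSumFinEquiv finSumFinEquiv +
          c • (1 : Matrix (Fin (m + 1)) (Fin (m + 1)) ℝ).submatrix finSumFinEquiv finSumFinEquiv :=
      rfl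
    rw [hsub, gramMat_snoc_submatrix hk.1, submatrix_one_equiv, ← fromBlocks_one, fromBlocks_smul,
      fromBlocks_add, conjTranspose_replicateCol, star_trivial]
    ext (i | i) (j | j) <;> simp [Fin.fin_one_eq_zero]
  rw [← det_submatrix_equiv_self finSumFinEquiv, hblock, det_fromBlocks₁₁, invOf_eq_nonsing_inv,
    schur_complement_eq_postVar, det_fin_one, of_apply]

lemma preT_succ (xs : ℕ → 𝒳) (t : ℕ) : preT xs (t + 1) = Fin.snoc (preT xs t) (xs t) := by
  ext i
  induction i using Fin.lastCases <;> simp [preT]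

lemma preT_comp_castLE (xs : ℕ → 𝒳) {s t : ℕ} (h : s ≤ t) :
    preT xs t ∘ Fin.castLE h = preT xs s :=
  rfl

lemma IsKernel.postVar_preT_le_of_postStd_le (hk : IsKernel k) (xs : ℕ → 𝒳) {s t : ℕ}
    (hst : s ≤ t) {c d : ℝ} (hc : 0 ≤ c) (hcd : c ≤ d)
    (hAt : (gramMat k (preT xs t) + c • (1 : Matrix (Fin t) (Fin t) ℝ)).PosDef)
    (hAs : (gramMat k (preT xs s) + c • (1 : Matrix (Fin s) (Fin s) ℝ)).PosDef) {x : 𝒳}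
    (hmax : postStd k (c • (1 : Matrix (Fin s) (Fin s) ℝ)) (preT xs s) x ≤
      postStd k (c • (1 : Matrix (Fin s) (Fin s) ℝ)) (preT xs s) (xs s)) :
    postVar k (c • (1 : Matrix (Fin t) (Fin t) ℝ)) (preT xs t) x ≤
      postVar k (d • (1 : Matrix (Fin s) (Fin s) ℝ)) (preT xs s) (xs s) := by
  have hd : ((d - c) • (1 : Matrix (Fin s) (Fin s) ℝ)).PosSemidef :=
    PosSemidef.one.smul (sub_nonneg.mpr hcd)
  calc postVar k (c • 1) (preT xs t) x
      ≤ postVar k (c • 1) (preT xs s) x := by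
        simpa [submatrix_smul, submatrix_one _ (Fin.castLE_injective hst), preT_comp_castLE] using
          postVar_le_postVar_comp _ hAt (Fin.castLE_injective hst) x
    _ ≤ postVar k (c • 1) (preT xs s) (xs s) :=
        (sqrt_le_sqrt_iff (hk.postVar_nonneg _ hc hAs _)).mp hmax
    _ ≤ postVar k (d • 1) (preT xs s) (xs s) := by
        refine postVar_le_postVar_of_posSemidef_sub _ hAs ?_ (by rwa [← sub_smul]) _
        rw [show d = c + (d - c) by ring, add_smul, ← add_assoc]
        exact hAs.add_posSemidef hd

lemma IsKernel.det_gramMat_preT_add_smul_one (hk : IsKernel k) (xs : ℕ → 𝒳) {c : ℝ} (hc : 0 < c)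
    (t : ℕ) :
    (gramMat k (preT xs t) + c • (1 : Matrix (Fin t) (Fin t) ℝ)).det =
      ∏ s ∈ range t, (c + postVar k (c • (1 : Matrix (Fin s) (Fin s) ℝ)) (preT xs s) (xs s)) := by
  induction t with
  | zero => simp
  | succ t ih =>
    rw [preT_succ, hk.det_gramMat_snoc_add_smul_one _ _ (hk.posDef_gramMat_add_smul_one _ hc), ih,
      prod_range_succ]

lemma IsKernel.infoGain_preT (hk : IsKernel k) (xs : ℕ → 𝒳) {c : ℝ} (hc : 0 < c) (T : ℕ) :
    infoGain k (c • (1 : Matrix (Fin T) (Fin T) ℝ)) (preT xs T) =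
      (1 / 2) * ∑ s ∈ range T,
        log (1 + postVar k (c • (1 : Matrix (Fin s) (Fin s) ℝ)) (preT xs s) (xs s) / c) := by
  have hterm : ∀ s ∈ range T,
      1 + postVar k (c • (1 : Matrix (Fin s) (Fin s) ℝ)) (preT xs s) (xs s) / c ≠ 0 := fun s _ => by
    have := hk.postVar_nonneg _ hc.le (hk.posDef_gramMat_add_smul_one (preT xs s) hc) (xs s)
    positivity
  rw [infoGain, add_comm, hk.det_gramMat_preT_add_smul_one xs hc, det_smul, det_one, mul_one,
    Fintype.card_fin, ← log_prod hterm, show c ^ T = ∏ _s ∈ range T, c by simp,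
    ← prod_div_distrib]
  congr 2
  refine prod_congr rfl fun s _ => ?_
  field_simp

end Kernel

lemma div_add_le_log_one_add_div {a c : ℝ} (hc : 0 < c) (ha : 0 ≤ a) :
    a / (c + a) ≤ log (1 + a / c) := by
  have h := one_sub_inv_le_log_of_pos (by positivity : 0 < 1 + a / c)
  have hca : 1 - (1 + a / c)⁻¹ = a / (c + a) := by field_simp; ring
  rwa [hca] at h

lemma sqrt_le_four_div_mul_sqrt_of_mul_le {a c γ T : ℝ} (hT : 0 < T) (ha : 0 ≤ a)
    (h : a * T ≤ 3 * c * γ) : √a ≤ 4 / T * √(c * T * γ) := by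
  have hsq : a ≤ (4 / T) ^ 2 * (c * T * γ) := by
    rw [div_pow, div_mul_eq_mul_div, le_div_iff₀ (by positivity)]
    nlinarith
  calc √a ≤ √((4 / T) ^ 2 * (c * T * γ)) := sqrt_le_sqrt hsq
    _ = 4 / T * √(c * T * γ) := by rw [sqrt_mul (sq_nonneg _), sqrt_sq (by positivity)]

lemma mul_card_le_of_sum_log_one_add_div_le {ι : Type*} (s : Finset ι) (w : ι → ℝ)
    {a c γ : ℝ} (hc : 0 < c) (ha : 0 ≤ a) (haw : ∀ i ∈ s, a ≤ w i)
    (hsum : ∑ i ∈ s, log (1 + w i / c) ≤ 2 * γ) (hs : 3 * γ ≤ (#s : ℝ) / 2) :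
    a * #s ≤ 3 * c * γ := by
  have hlog : #s * log (1 + a / c) ≤ 2 * γ := by
    refine le_trans ?_ hsum
    rw [← nsmul_eq_mul, ← sum_const]
    refine sum_le_sum fun i hi => log_le_log (by positivity) ?_
    gcongr
    exact haw i hi
  have hfrac : #s * (a / (c + a)) ≤ 2 * γ :=
    le_trans (mul_le_mul_of_nonneg_left (div_add_le_log_one_add_div hc ha) (by positivity)) hlog
  rw [mul_div_assoc', div_le_iff₀ (by positivity)] at hfrac
  nlinarith

theorem mvr_posterior_variance_bound_stationary_general
    {𝒳 : Type u} (k : 𝒳 → 𝒳 → ℝ) (hk : IsKernel k)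
    (T : ℕ) (hT : 0 < T)
    (lamBar lamTil : ℝ) (hBar : 0 ≤ lamBar) (hTil : 0 < lamTil) (hle : lamBar ≤ lamTil)
    (Xtil : Set 𝒳)
    (xs : ℕ → 𝒳)
    (hinv : ∀ t ≤ T,
      (gramMat k (preT xs t) + (lamBar ^ 2) • (1 : Matrix (Fin t) (Fin t) ℝ)).det ≠ 0)
    (hMVR : ∀ t < T, ∀ x ∈ Xtil,
      postStd k ((lamBar ^ 2) • (1 : Matrix (Fin t) (Fin t) ℝ)) (preT xs t) x
        ≤ postStd k ((lamBar ^ 2) • (1 : Matrix (Fin t) (Fin t) ℝ)) (preT xs t) (xs t))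
    (γ : ℝ)
    (hIG : ∀ Z : Fin T → 𝒳,
      infoGain k ((lamTil ^ 2) • (1 : Matrix (Fin T) (Fin T) ℝ)) Z ≤ γ)
    (hbig : (T : ℝ) / 2 ≥ 3 * γ) :
    ∀ x ∈ Xtil,
      postStd k ((lamBar ^ 2) • (1 : Matrix (Fin T) (Fin T) ℝ)) (preT xs T) x
        ≤ (4 / (T : ℝ)) * Real.sqrt (lamTil ^ 2 * T * γ) := by
  intro x hx
  have hlamTil : 0 < lamTil ^ 2 := by positivity
  have hA : ∀ t ≤ T, (gramMat k (preT xs t) + lamBar ^ 2 • (1 : Matrix (Fin t) (Fin t) ℝ)).PosDef :=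
    fun t ht => (hk.posSemidef_gramMat_add_smul_one _ (sq_nonneg lamBar)).posDef_iff_det_ne_zero.mpr
      (hinv t ht)
  have hvar_nonneg := hk.postVar_nonneg _ (sq_nonneg _) (hA T le_rfl) x
  have hstep : ∀ s ∈ range T, postVar k (lamBar ^ 2 • 1) (preT xs T) x ≤
      postVar k (lamTil ^ 2 • (1 : Matrix (Fin s) (Fin s) ℝ)) (preT xs s) (xs s) := fun s hs =>
    have hs : s < T := mem_range.mp hs
    hk.postVar_preT_le_of_postStd_le xs hs.le (sq_nonneg _) (pow_le_pow_left₀ hBar hle 2)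
      (hA T le_rfl) (hA s hs.le) (hMVR s hs x hx)
  have hsum := hIG (preT xs T)
  rw [hk.infoGain_preT xs hlamTil] at hsum
  have hvar := mul_card_le_of_sum_log_one_add_div_le (γ := γ) (range T) _ hlamTil hvar_nonneg hstep
    (by linarith) (by simpa using hbig)
  rw [card_range] at hvar
  exact sqrt_le_four_div_mul_sqrt_of_mul_le (by exact_mod_cast hT) hvar_nonneg hvar

/-- posterior variance upper bound for MVR with stationary noise level. -/
theorem mvr_posterior_variance_bound_stationary
    {𝒳 : Type u} (k : 𝒳 → 𝒳 → ℝ) (hk : IsKernel k)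
    (T : ℕ) (hT : 0 < T)
    (lamBar lamTil : ℝ) (hBar : 0 ≤ lamBar) (hTil : 0 < lamTil) (hle : lamBar ≤ lamTil)
    (Xtil : Set 𝒳) (hXtil : Xtil.Nonempty)
    (xs : ℕ → 𝒳) (hmem : ∀ t < T, xs t ∈ Xtil)
    (hinv : ∀ t ≤ T,
      (gramMat k (preT xs t) + (lamBar ^ 2) • (1 : Matrix (Fin t) (Fin t) ℝ)).det ≠ 0)
    (hMVR : ∀ t < T, ∀ x ∈ Xtil,
      postStd k ((lamBar ^ 2) • (1 : Matrix (Fin t) (Fin t) ℝ)) (preT xs t) x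
        ≤ postStd k ((lamBar ^ 2) • (1 : Matrix (Fin t) (Fin t) ℝ)) (preT xs t) (xs t))
    (γ : ℝ) (hγ : 0 ≤ γ)
    (hIG : ∀ Z : Fin T → 𝒳,
      infoGain k ((lamTil ^ 2) • (1 : Matrix (Fin T) (Fin T) ℝ)) Z ≤ γ)
    (hbig : (T : ℝ) / 2 ≥ 3 * γ) :
    ∀ x ∈ Xtil,
      postStd k ((lamBar ^ 2) • (1 : Matrix (Fin T) (Fin T) ℝ)) (preT xs T) x
        ≤ (4 / (T : ℝ)) * Real.sqrt (lamTil ^ 2 * T * γ) :=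
  mvr_posterior_variance_bound_stationary_general k hk T hT lamBar lamTil hBar hTil hle Xtil xs hinv
    hMVR γ hIG hbig
end
end

section
/- (Monotone property of the information gain.) Let K be a real T×T positive semidefinite matrix and Σ = diag(λ_1²,…,λ_T²) a diagonal matrix whose entries satisfy λ_t² ≥ λ̲² for all t, where λ̲ > 0. Then ln( det(Σ + K) / det(Σ) ) ≤ ln( det(λ̲²·I_T + K) / det(λ̲²·I_T) ). -/
open Matrix Real Finset

noncomputable section

universe u

open scoped MatrixOrder

/-!
Write `K = R * R` with `R = √K`. The matrix determinant lemma gives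
`det (Σ + K) / det Σ = det (1 + R Σ⁻¹ R)`. For diagonal `Σ ≥ λ̲² • 1` we have `Σ⁻¹ ≤ λ̲⁻² • 1` in the
Loewner order, and conjugation by `R` preserves this. It remains that the determinant is monotone on
positive definite matrices: if `0 < A ≤ B`, write `B = A + S * S`; then
`det B = det A * det (1 + S A⁻¹ S)`, and the last factor is at least `1` because all eigenvalues of
`1 + S A⁻¹ S` are at least `1`.
-/

namespace Matrix

theorem diagonal_le_diagonal {n : Type*} [DecidableEq n] {d e : n → ℝ} (hde : d ≤ e) :
    diagonal d ≤ diagonal e := by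
  rw [le_iff, diagonal_sub]
  exact PosSemidef.diagonal (sub_nonneg.mpr hde)

variable {n : Type*} [Fintype n] [DecidableEq n]

theorem one_le_det_one_add {W : Matrix n n ℝ} (hW : W.PosSemidef) : 1 ≤ (1 + W).det := by
  have hH : (1 + W).IsHermitian := isHermitian_one.add hW.isHermitian
  rw [hH.det_eq_prod_eigenvalues]
  refine Finset.one_le_prod fun i _ => ?_
  have hi : hH.eigenvalues i - 1 ∈ spectrum ℝ W := by
    rw [← spectrum.add_mem_add_iff (s := 1)]
    simpa using hH.eigenvalues_mem_spectrum_real i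
  have hnonneg := (posSemidef_iff_isHermitian_and_spectrum_nonneg.mp hW).2 hi
  simp only [RCLike.ofReal_real_eq_id, id_eq, Set.mem_ofPred_eq] at hnonneg ⊢
  linarith

theorem PosDef.det_le_det_of_le {A B : Matrix n n ℝ} (hA : A.PosDef) (hAB : A ≤ B) :
    A.det ≤ B.det := by
  set S := CFC.sqrt (B - A)
  have hS : 0 ≤ S := CFC.sqrt_nonneg _
  have hB : B = A + S * S := by
    rw [CFC.sqrt_mul_sqrt_self _ (sub_nonneg.mpr hAB)]
    abel
  have hW : 0 ≤ S * A⁻¹ * S := conjugate_nonneg_of_nonneg hA.inv.posSemidef.nonneg hS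
  calc A.det = A.det * 1 := (mul_one _).symm
    _ ≤ A.det * (1 + S * A⁻¹ * S).det :=
      mul_le_mul_of_nonneg_left (one_le_det_one_add hW.posSemidef) hA.det_pos.le
    _ = B.det := by rw [hB, det_add_mul _ _ hA.det_pos.ne'.isUnit]

theorem det_add_mul_self_div_det {S R : Matrix n n ℝ} (hS : IsUnit S.det) :
    (S + R * R).det / S.det = (1 + R * S⁻¹ * R).det := by
  rw [det_add_mul R R hS, mul_div_cancel_left₀ _ hS.ne_zero]

theorem det_add_div_det_le_of_inv_le {S₁ S₂ K : Matrix n n ℝ} (h₁ : IsUnit S₁.det)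
    (h₂ : IsUnit S₂.det) (hS₁ : 0 ≤ S₁⁻¹) (hS : S₁⁻¹ ≤ S₂⁻¹) (hK : 0 ≤ K) :
    (S₁ + K).det / S₁.det ≤ (S₂ + K).det / S₂.det := by
  set R := CFC.sqrt K
  have hR : 0 ≤ R := CFC.sqrt_nonneg K
  rw [← CFC.sqrt_mul_sqrt_self K hK, det_add_mul_self_div_det h₁, det_add_mul_self_div_det h₂]
  have hR₁ : 0 ≤ R * S₁⁻¹ * R := conjugate_nonneg_of_nonneg hS₁ hR
  exact (PosDef.one.add_posSemidef hR₁.posSemidef).det_le_det_of_le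
    (add_le_add_right (conjugate_le_conjugate_of_nonneg hS hR) 1)

theorem inv_diagonal_of_ne_zero {d : n → ℝ} (hd : ∀ i, d i ≠ 0) :
    (diagonal d)⁻¹ = diagonal d⁻¹ := by
  refine inv_eq_left_inv ?_
  rw [diagonal_mul_diagonal, ← diagonal_one]
  exact congrArg diagonal (funext fun i => inv_mul_cancel₀ (hd i))

theorem det_add_div_det_diagonal_le {d e : n → ℝ} {K : Matrix n n ℝ} (he : ∀ i, 0 < e i)
    (hed : ∀ i, e i ≤ d i) (hK : K.PosSemidef) :
    (diagonal d + K).det / (diagonal d).det ≤ (diagonal e + K).det / (diagonal e).det := by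
  have hd : ∀ i, 0 < d i := fun i => (he i).trans_le (hed i)
  have hdet {f : n → ℝ} (hf : ∀ i, 0 < f i) : IsUnit (diagonal f).det := by
    rw [det_diagonal]
    exact (Finset.prod_pos fun i _ => hf i).ne'.isUnit
  refine det_add_div_det_le_of_inv_le (hdet hd) (hdet he) ?_ ?_ hK.nonneg
  · rw [inv_diagonal_of_ne_zero fun i => (hd i).ne']
    exact (PosSemidef.diagonal fun i => inv_nonneg.mpr (hd i).le).nonneg
  · rw [inv_diagonal_of_ne_zero fun i => (hd i).ne', inv_diagonal_of_ne_zero fun i => (he i).ne']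
    exact diagonal_le_diagonal fun i => inv_anti₀ (he i) (hed i)

end Matrix

/-- monotone property of the information gain. -/
theorem infoGain_monotone_in_noise
    (T : ℕ) (K : Matrix (Fin T) (Fin T) ℝ) (hK : K.PosSemidef)
    (lam : Fin T → ℝ) (lmin : ℝ) (hlmin : 0 < lmin)
    (hge : ∀ t, lmin ^ 2 ≤ lam t ^ 2) :
    Real.log ((Matrix.diagonal (fun t : Fin T => lam t ^ 2) + K).det
        / (Matrix.diagonal (fun t : Fin T => lam t ^ 2)).det)
      ≤ Real.log (((lmin ^ 2) • (1 : Matrix (Fin T) (Fin T) ℝ) + K).det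
        / ((lmin ^ 2) • (1 : Matrix (Fin T) (Fin T) ℝ)).det) := by
  have hc : 0 < lmin ^ 2 := by positivity
  have hnoise : (diagonal fun t => lam t ^ 2).PosDef :=
    PosDef.diagonal fun t => hc.trans_le (hge t)
  rw [smul_one_eq_diagonal]
  exact Real.log_le_log (div_pos (hnoise.add_posSemidef hK).det_pos hnoise.det_pos)
    (det_add_div_det_diagonal_le (fun _ => hc) hge hK)
end
end

section
/- (Monotonicity of the posterior variance in the noise parameters.) Let X_t = (x_1,…,x_t) be a tuple of points of 𝒳 and let Σ = diag(λ_1²,…,λ_t²) and Σ' = diag(λ'_1²,…,λ'_t²) be diagonal matrices with 0 ≤ λ_i ≤ λ'_i and λ'_i > 0 for all i ∈ [t], such that K(X_t,X_t)+Σ is invertible. Then for every x ∈ 𝒳, σ²_Σ(x; X_t) ≤ σ²_{Σ'}(x; X_t). -/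
open Matrix Real Finset

noncomputable section

universe u

/-! For `A` positive semidefinite with `A u = v`, `u ⬝ v` is the maximum over `y` of
`2 (y ⬝ v) - y ⬝ A y`, and each of these functions is antitone in `A` for the Loewner order. Hence
`v ⬝ A⁻¹ v` is antitone on positive definite matrices; raising the noise variances raises `K + Σ`
in that order, so the term subtracted in the posterior variance can only shrink. -/

open scoped MatrixOrder

namespace Matrix

variable {n : Type*}

lemma diagonal_le_diagonal_iff [DecidableEq n] {d e : n → ℝ} :
    diagonal d ≤ diagonal e ↔ d ≤ e := by
  rw [le_iff, diagonal_sub, posSemidef_diagonal_iff, Pi.le_def]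
  simp only [sub_nonneg]

lemma PosSemidef.two_mul_dotProduct_sub_le [Fintype n] {A : Matrix n n ℝ} (hA : A.PosSemidef)
    {u v : n → ℝ} (huv : A *ᵥ u = v) (y : n → ℝ) :
    2 * (y ⬝ᵥ v) - y ⬝ᵥ (A *ᵥ y) ≤ u ⬝ᵥ v := by
  have hsymm : u ⬝ᵥ (A *ᵥ y) = y ⬝ᵥ v := by
    rw [← huv, dotProduct_mulVec, ← mulVec_transpose, ← conjTranspose_eq_transpose_of_trivial,
      hA.isHermitian.eq, dotProduct_comm]
  have hsq : 0 ≤ (y - u) ⬝ᵥ (A *ᵥ (y - u)) := by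
    simpa using hA.dotProduct_mulVec_nonneg (y - u)
  simp only [mulVec_sub, dotProduct_sub, sub_dotProduct, huv, hsymm] at hsq
  linarith

lemma PosDef.dotProduct_inv_mulVec_le_of_le [Fintype n] [DecidableEq n] {A B : Matrix n n ℝ}
    (hA : A.PosDef) (hAB : A ≤ B) (v : n → ℝ) :
    v ⬝ᵥ (B⁻¹ *ᵥ v) ≤ v ⬝ᵥ (A⁻¹ *ᵥ v) := by
  have hB : B.PosDef := by simpa using hA.add_posSemidef hAB
  have inv_mulVec {M : Matrix n n ℝ} (hM : M.PosDef) : M *ᵥ (M⁻¹ *ᵥ v) = v := by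
    rw [mulVec_mulVec, mul_nonsing_inv _ (isUnit_iff_isUnit_det M |>.mp hM.isUnit), one_mulVec]
  set w := B⁻¹ *ᵥ v
  have hgap : 0 ≤ w ⬝ᵥ ((B - A) *ᵥ w) := by simpa using hAB.dotProduct_mulVec_nonneg w
  calc v ⬝ᵥ w = 2 * (w ⬝ᵥ v) - w ⬝ᵥ (B *ᵥ w) := by
          rw [inv_mulVec hB, dotProduct_comm]; ring
    _ ≤ 2 * (w ⬝ᵥ v) - w ⬝ᵥ (A *ᵥ w) := by
          rw [sub_mulVec, dotProduct_sub] at hgap; linarith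
    _ ≤ (A⁻¹ *ᵥ v) ⬝ᵥ v := hA.posSemidef.two_mul_dotProduct_sub_le (inv_mulVec hA) w
    _ = v ⬝ᵥ (A⁻¹ *ᵥ v) := dotProduct_comm _ _

end Matrix

theorem postVar_mono_noise_general
    {𝒳 : Type u} (k : 𝒳 → 𝒳 → ℝ) (hk : IsKernel k)
    (t : ℕ) (X : Fin t → 𝒳) (lam lam' : Fin t → ℝ)
    (h0 : ∀ i, 0 ≤ lam i) (hle : ∀ i, lam i ≤ lam' i)
    (hinv : (gramMat k X + Matrix.diagonal fun i => lam i ^ 2).det ≠ 0) :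
    ∀ x : 𝒳,
      postVar k (Matrix.diagonal fun i => lam i ^ 2) X x
        ≤ postVar k (Matrix.diagonal fun i => lam' i ^ 2) X x := by
  intro x
  have hnoise : (diagonal fun i => lam i ^ 2) ≤ diagonal fun i => lam' i ^ 2 :=
    diagonal_le_diagonal_iff.2 fun i => pow_le_pow_left₀ (h0 i) (hle i) 2
  have hpd : (gramMat k X + diagonal fun i => lam i ^ 2).PosDef :=
    ((hk.2 t X).add (PosSemidef.diagonal fun i => sq_nonneg (lam i))).posDef_iff_det_ne_zero.2 hinv
  exact sub_le_sub_left
    (hpd.dotProduct_inv_mulVec_le_of_le (add_le_add_right hnoise _) (kVec k X x)) _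

/-- monotonicity of the posterior variance in the noise parameters. -/
theorem postVar_mono_noise
    {𝒳 : Type u} (k : 𝒳 → 𝒳 → ℝ) (hk : IsKernel k)
    (t : ℕ) (X : Fin t → 𝒳) (lam lam' : Fin t → ℝ)
    (h0 : ∀ i, 0 ≤ lam i) (hle : ∀ i, lam i ≤ lam' i) (hpos : ∀ i, 0 < lam' i)
    (hinv : (gramMat k X + Matrix.diagonal fun i => lam i ^ 2).det ≠ 0) :
    ∀ x : 𝒳,
      postVar k (Matrix.diagonal fun i => lam i ^ 2) X x
        ≤ postVar k (Matrix.diagonal fun i => lam' i ^ 2) X x :=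
  postVar_mono_noise_general k hk t X lam lam' h0 hle hinv
end
end

section
/- (Chain rule for the information gain.) For every T-tuple X_T = (x_1,…,x_T) of points of 𝒳 and every positive diagonal matrix Σ_T = diag(λ_1²,…,λ_T²) with λ_t > 0 for all t: (1/2)·ln( det(Σ_T + K(X_T,X_T)) / det(Σ_T) ) = Σ_{t=1}^T (1/2)·ln( 1 + λ_t^{−2}·σ²_{Σ_{t−1}}(x_t; X_{t−1}) ), where X_{t−1} := (x_1,…,x_{t−1}) and Σ_{t−1} := diag(λ_1²,…,λ_{t−1}²). -/
open Matrix Real Finset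

noncomputable section

universe u

/-! Bordering `Σ_t + K(X_t, X_t)` by the point `x_t` multiplies its determinant by the Schur
complement `λ_t² + σ²_{Σ_t}(x_t; X_t)`, while `det Σ_t` gains the factor `λ_t²`. Hence
`det (Σ_T + K) / det Σ_T` telescopes to `∏_t (1 + λ_t⁻² σ²_{Σ_t}(x_t; X_t))`, every factor being
positive because `Σ_t + K(X_t, X_t)` is positive definite, and the logarithm turns the product into
the sum. -/

theorem Matrix.det_succ_eq_det_castSucc_mul_schur {R : Type*} [CommRing R] {n : ℕ}
    (M : Matrix (Fin (n + 1)) (Fin (n + 1)) R)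
    (hA : IsUnit (M.submatrix Fin.castSucc Fin.castSucc).det) :
    M.det = (M.submatrix Fin.castSucc Fin.castSucc).det *
      (M (Fin.last n) (Fin.last n) - (fun j => M (Fin.last n) j.castSucc) ⬝ᵥ
        ((M.submatrix Fin.castSucc Fin.castSucc)⁻¹ *ᵥ fun i => M i.castSucc (Fin.last n))) := by
  set A := M.submatrix Fin.castSucc Fin.castSucc
  have : Invertible A := invertibleOfIsUnitDet _ hA
  have hblocks : M.submatrix finSumFinEquiv finSumFinEquiv =
      fromBlocks A (replicateCol (Fin 1) fun i => M i.castSucc (Fin.last n))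
        (replicateRow (Fin 1) fun j => M (Fin.last n) j.castSucc)
        (of fun _ _ => M (Fin.last n) (Fin.last n)) := by
    ext (i | i) (j | j) <;> simp [A, Fin.eq_zero] <;> rfl
  rw [← det_submatrix_equiv_self finSumFinEquiv, hblocks, det_fromBlocks₁₁, det_fin_one,
    invOf_eq_nonsing_inv, Matrix.mul_assoc, sub_apply, mul_apply]
  simp [mulVec, dotProduct, mul_apply]

theorem Matrix.det_diagonal_fin_succ {R : Type*} [CommRing R] (s : ℕ → R) (t : ℕ) :
    (diagonal fun i : Fin (t + 1) => s i).det = (diagonal fun i : Fin t => s i).det * s t := by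
  simp [det_diagonal, Fin.prod_univ_castSucc]

theorem IsKernel.posDef_diagonal_add_gramMat {𝒳 : Type u} {k : 𝒳 → 𝒳 → ℝ} (hk : IsKernel k)
    {m : ℕ} (X : Fin m → 𝒳) {d : Fin m → ℝ} (hd : ∀ i, 0 < d i) :
    (diagonal d + gramMat k X).PosDef :=
  (PosDef.diagonal hd).add_posSemidef (hk.2 m X)

section Prefix

variable {𝒳 : Type u} {k : 𝒳 → 𝒳 → ℝ} {xs : ℕ → 𝒳} {s : ℕ → ℝ}

theorem det_diagonal_add_gramMat_preT_succ (hk_symm : ∀ x y, k x y = k y x) (t : ℕ)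
    (hA : IsUnit (diagonal (fun i : Fin t => s i) + gramMat k (preT xs t)).det) :
    (diagonal (fun i : Fin (t + 1) => s i) + gramMat k (preT xs (t + 1))).det =
      (diagonal (fun i : Fin t => s i) + gramMat k (preT xs t)).det *
        (s t + postVar k (diagonal fun i : Fin t => s i) (preT xs t) (xs t)) := by
  set M := diagonal (fun i : Fin (t + 1) => s i) + gramMat k (preT xs (t + 1))
  have hsub : M.submatrix Fin.castSucc Fin.castSucc =
      diagonal (fun i : Fin t => s i) + gramMat k (preT xs t) := by
    ext i j
    simp [M, diagonal_apply, gramMat, preT]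
  have hlast : M (Fin.last t) (Fin.last t) = s t + k (xs t) (xs t) := by
    simp [M, gramMat, preT]
  have hrow : (fun j => M (Fin.last t) j.castSucc) = kVec k (preT xs t) (xs t) := by
    ext j
    simp [M, gramMat, preT, kVec, diagonal_apply_ne _ (Fin.castSucc_ne_last j).symm]
  have hcol : (fun i => M i.castSucc (Fin.last t)) = kVec k (preT xs t) (xs t) := by
    ext i
    simp [M, gramMat, preT, kVec, hk_symm (xs i)]
  rw [det_succ_eq_det_castSucc_mul_schur M (hsub ▸ hA), hsub, hlast, hrow, hcol, postVar,
    add_comm (gramMat k _)]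
  ring

theorem one_add_inv_mul_postVar_pos (hk : IsKernel k) (t : ℕ) (hs : ∀ i ≤ t, 0 < s i) :
    0 < 1 + (s t)⁻¹ * postVar k (diagonal fun i : Fin t => s i) (preT xs t) (xs t) := by
  have hA := hk.posDef_diagonal_add_gramMat (preT xs t) fun i : Fin t => hs i i.is_lt.le
  have hdet := (hk.posDef_diagonal_add_gramMat (preT xs (t + 1))
    fun i : Fin (t + 1) => hs i i.is_le).det_pos
  rw [det_diagonal_add_gramMat_preT_succ hk.1 t hA.det_pos.ne'.isUnit] at hdet
  have hst := hs t le_rfl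
  rw [inv_mul_eq_div, one_add_div hst.ne']
  exact div_pos (pos_of_mul_pos_right hdet hA.det_pos.le) hst

theorem det_diagonal_add_gramMat_div_det_eq_prod (hk : IsKernel k) (T : ℕ)
    (hs : ∀ t < T, 0 < s t) :
    (diagonal (fun i : Fin T => s i) + gramMat k (preT xs T)).det /
        (diagonal fun i : Fin T => s i).det =
      ∏ t ∈ range T,
        (1 + (s t)⁻¹ * postVar k (diagonal fun i : Fin t => s i) (preT xs t) (xs t)) := by
  induction T with
  | zero => simp
  | succ T ih =>
    have hs' : ∀ i : Fin T, 0 < s i := fun i => hs i (i.is_lt.trans T.lt_succ_self)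
    have hA := hk.posDef_diagonal_add_gramMat (preT xs T) hs'
    rw [prod_range_succ, ← ih fun t ht => hs t (ht.trans T.lt_succ_self),
      det_diagonal_add_gramMat_preT_succ hk.1 T hA.det_pos.ne'.isUnit, det_diagonal_fin_succ]
    have hdiag := (PosDef.diagonal hs').det_pos
    have hsT := hs T T.lt_succ_self
    field_simp

end Prefix

/-- chain rule for the information gain. -/
theorem infoGain_chain_rule
    {𝒳 : Type u} (k : 𝒳 → 𝒳 → ℝ) (hk : IsKernel k)
    (T : ℕ) (xs : ℕ → 𝒳) (lam : ℕ → ℝ) (hpos : ∀ t < T, 0 < lam t) :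
    infoGain k (Matrix.diagonal fun i : Fin T => lam i.val ^ 2) (preT xs T)
      = ∑ t ∈ Finset.range T, (1 / 2) *
          Real.log (1 + (lam t ^ 2)⁻¹ *
            postVar k (Matrix.diagonal fun i : Fin t => lam i.val ^ 2) (preT xs t) (xs t)) := by
  have hs : ∀ t < T, 0 < lam t ^ 2 := fun t ht => pow_pos (hpos t ht) 2
  have hfactor : ∀ t ∈ range T, 1 + (lam t ^ 2)⁻¹ *
      postVar k (diagonal fun i : Fin t => lam i ^ 2) (preT xs t) (xs t) ≠ 0 :=
    fun t ht => (one_add_inv_mul_postVar_pos (s := fun t => lam t ^ 2) hk t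
      fun i hi => hs i (hi.trans_lt (mem_range.mp ht))).ne'
  rw [infoGain, det_diagonal_add_gramMat_div_det_eq_prod (s := fun t => lam t ^ 2) hk T hs,
    log_prod hfactor, mul_sum]
end
end

section
/- Let X_T = (x_1,…,x_T) be a tuple of points of 𝒳 and Σ = diag(λ_1²,…,λ_T²) with λ_t > 0 for all t; for x ∈ 𝒳 set Z_T(x) := (K(X_T,X_T)+Σ)⁻¹·k(x,X_T) ∈ ℝ^T. Then Z_T(x)ᵀ·Σ·Z_T(x) ≤ σ²_Σ(x; X_T); equivalently, k(x,X_T)ᵀ(K(X_T,X_T)+Σ)⁻¹Σ(K(X_T,X_T)+Σ)⁻¹k(x,X_T) ≤ k(x,x) − k(x,X_T)ᵀ(K(X_T,X_T)+Σ)⁻¹k(x,X_T). -/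
open Matrix Real Finset

noncomputable section

universe u

/-! With `A := K + Σ`, `v := k(x, X)` and `z := A⁻¹ v` we have `Σ z = v - K z`, so
`zᵀ Σ z ≤ σ²(x)` rearranges to `0 ≤ k(x, x) - 2 vᵀ z + zᵀ K z`. The right-hand side is the
quadratic form of the Gram matrix of `(x, x₁, …, x_T)` at the vector `(1, -z)`, hence nonnegative. -/

namespace IsKernel

variable {𝒳 : Type u} {k : 𝒳 → 𝒳 → ℝ}

theorem two_mul_kVec_dotProduct_le (hk : IsKernel k) {m : ℕ} (X : Fin m → 𝒳) (x : 𝒳)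
    (z : Fin m → ℝ) :
    2 * (kVec k X x ⬝ᵥ z) ≤ k x x + z ⬝ᵥ (gramMat k X *ᵥ z) := by
  have hnonneg := (hk.2 (m + 1) (Fin.cons x X)).dotProduct_mulVec_nonneg
    (Fin.cons 1 (-z) : Fin (m + 1) → ℝ)
  have hexpand : (Fin.cons 1 (-z) : Fin (m + 1) → ℝ) ⬝ᵥ
      (gramMat k (Fin.cons x X) *ᵥ Fin.cons 1 (-z)) =
        k x x - 2 * (kVec k X x ⬝ᵥ z) + z ⬝ᵥ (gramMat k X *ᵥ z) := by
    simp only [dotProduct, mulVec, Fin.sum_univ_succ, Fin.cons_zero, Fin.cons_succ, gramMat,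
      of_apply, kVec, Pi.neg_apply, hk.1 _ x]
    simp only [mul_add, mul_neg, mul_one, mul_sum, sum_add_distrib, sum_neg_distrib, neg_mul,
      one_mul, mul_comm (z _) (k x _)]
    ring_nf
    rw [sum_mul]
    ring
  simp only [star_trivial] at hnonneg
  linarith

theorem dotProduct_mulVec_le_postVar (hk : IsKernel k) {m : ℕ} (X : Fin m → 𝒳)
    (S : Matrix (Fin m) (Fin m) ℝ) (hA : IsUnit (gramMat k X + S)) (x : 𝒳) :
    ((gramMat k X + S)⁻¹ *ᵥ kVec k X x) ⬝ᵥ (S *ᵥ ((gramMat k X + S)⁻¹ *ᵥ kVec k X x))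
      ≤ postVar k S X x := by
  set v := kVec k X x
  set z := (gramMat k X + S)⁻¹ *ᵥ v
  have hAz : (gramMat k X + S) *ᵥ z = v := by
    rw [mulVec_mulVec, mul_nonsing_inv _ ((isUnit_iff_isUnit_det _).1 hA), one_mulVec]
  have hSz : S *ᵥ z = v - gramMat k X *ᵥ z := by
    rw [← hAz, add_mulVec, add_sub_cancel_left]
  have := hk.two_mul_kVec_dotProduct_le X x z
  rw [postVar, hSz, dotProduct_sub, dotProduct_comm z v]
  linarith

end IsKernel

/-- the weighted quadratic form of `Z_T(x)` is bounded by the posterior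
variance. -/
theorem weighted_quadratic_form_le_postVar
    {𝒳 : Type u} (k : 𝒳 → 𝒳 → ℝ) (hk : IsKernel k)
    (T : ℕ) (X : Fin T → 𝒳) (lam : Fin T → ℝ) (hpos : ∀ i, 0 < lam i) (x : 𝒳) :
    ((gramMat k X + Matrix.diagonal fun i => lam i ^ 2)⁻¹ *ᵥ kVec k X x)
        ⬝ᵥ (Matrix.diagonal (fun i => lam i ^ 2) *ᵥ
            ((gramMat k X + Matrix.diagonal fun i => lam i ^ 2)⁻¹ *ᵥ kVec k X x))
      ≤ postVar k (Matrix.diagonal fun i => lam i ^ 2) X x := by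
  have hnoise : (Matrix.diagonal fun i => lam i ^ 2).PosDef :=
    PosDef.diagonal fun i => pow_pos (hpos i) 2
  exact hk.dotProduct_mulVec_le_postVar X _ (PosDef.posSemidef_add (hk.2 T X) hnoise).isUnit x
end
end
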